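/- arXiv:1701.00311 — 2 statements merged into one kernel-verified Lean document; each statement's English description precedes it below -/
import Mathlib

section
/- Under independent coordinates, if f* depends only on coordinates in I* and I = I₁ ∪ I₂ with I₁ ⊂ I* and I₂ ∩ I* = ∅, then the squared L² distance from f* to functions of X_I equals the squared L² distance from f* to functions of X_{I₁} plus E[(E[f*|X_{I₁}] - E[f*|X_I])²]; in particular d²(f*, Θ_I) ≥ d²(f*, Θ_{I₁}). -/
/-!
Since `f*` is `σ(X_{I*})`-measurable and `σ(X_{I*})` is independent of `σ(X_{I₂})`, both `f*` and
`E[f*|X_{I₁}]` integrate to `P(B) ∫_A f*` over `A ∩ B` for `A ∈ σ(X_{I₁})`, `B ∈ σ(X_{I₂})`. These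
sets form a π-system generating `σ(X_I)`, so `E[f*|X_I] = E[f*|X_{I₁}]` almost everywhere: the
correction term vanishes and the two distances coincide.
-/

open MeasureTheory ProbabilityTheory MeasurableSpace Filtration Set

/-- The sub-σ-algebra `σ(X_I)` of the product space generated by the coordinates in `I`. -/
def sigmaSub (p : ℕ) (I : Finset (Fin p)) : MeasurableSpace (Fin p → ℝ) :=
  MeasurableSpace.comap (fun ω (i : {x // x ∈ I}) => ω i.1) MeasurableSpace.pi

section PiSystem

variable {Ω : Type*}

lemma isPiSystem_image2_inter {C D : Set (Set Ω)} (hC : IsPiSystem C) (hD : IsPiSystem D) :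
    IsPiSystem (image2 (· ∩ ·) C D) := by
  rintro _ ⟨s₁, hs₁, s₂, hs₂, rfl⟩ _ ⟨t₁, ht₁, t₂, ht₂, rfl⟩ hne
  rw [inter_inter_inter_comm] at hne ⊢
  exact mem_image2_of_mem (hC _ hs₁ _ ht₁ hne.left) (hD _ hs₂ _ ht₂ hne.right)

lemma MeasurableSpace.sup_eq_generateFrom_inter (m₁ m₂ : MeasurableSpace Ω) :
    m₁ ⊔ m₂ =
      generateFrom (image2 (· ∩ ·) {s | MeasurableSet[m₁] s} {s | MeasurableSet[m₂] s}) := by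
  refine le_antisymm (sup_le (fun s hs => ?_) (fun s hs => ?_)) (generateFrom_le ?_)
  · rw [← inter_univ s]
    exact measurableSet_generateFrom (mem_image2_of_mem hs (@MeasurableSet.univ _ m₂))
  · rw [← univ_inter s]
    exact measurableSet_generateFrom (mem_image2_of_mem (@MeasurableSet.univ _ m₁) hs)
  · rintro _ ⟨s₁, hs₁, s₂, hs₂, rfl⟩
    exact (le_sup_left (b := m₂) _ hs₁).inter (le_sup_right (a := m₁) _ hs₂)

end PiSystem

section CondExp

variable {Ω E : Type*} [NormedAddCommGroup E] [NormedSpace ℝ E]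
  {m m₁ m₂ mΩ : MeasurableSpace Ω} {μ : Measure Ω} {f g : Ω → E}

lemma setIntegral_eq_setIntegral_of_isPiSystem {C : Set (Set Ω)} (hm : m ≤ mΩ)
    (h_eq : m = generateFrom C) (hC : IsPiSystem C) (hf : Integrable f μ) (hg : Integrable g μ)
    (h_univ : ∫ x, f x ∂μ = ∫ x, g x ∂μ)
    (h_basic : ∀ s ∈ C, ∫ x in s, f x ∂μ = ∫ x in s, g x ∂μ) :
    ∀ s, MeasurableSet[m] s → ∫ x in s, f x ∂μ = ∫ x in s, g x ∂μ := by
  refine induction_on_inter h_eq hC (by simp) h_basic ?_ ?_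
  · intro t ht h
    rw [setIntegral_compl (hm t ht) hf, setIntegral_compl (hm t ht) hg, h, h_univ]
  · intro t hdisj ht h
    rw [integral_iUnion (fun i => hm _ (ht i)) hdisj hf.integrableOn,
      integral_iUnion (fun i => hm _ (ht i)) hdisj hg.integrableOn]
    exact tsum_congr h

variable [CompleteSpace E] [IsFiniteMeasure μ]

lemma setIntegral_inter_eq_measureReal_smul_of_indep (hm : m ≤ mΩ) (hm₂ : m₂ ≤ mΩ)
    (hind : Indep m m₂ μ) (hf : StronglyMeasurable[m] f) (hf_int : Integrable f μ) {s t : Set Ω}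
    (hs : MeasurableSet[m] s) (ht : MeasurableSet[m₂] t) :
    ∫ x in s ∩ t, f x ∂μ = μ.real t • ∫ x in s, f x ∂μ := by
  have hcond := condExp_indep_eq hm hm₂ (hf.indicator hs) hind
  calc ∫ x in s ∩ t, f x ∂μ = ∫ x in t, s.indicator f x ∂μ := by
        rw [setIntegral_indicator (hm s hs), inter_comm]
    _ = ∫ x in t, μ[s.indicator f | m₂] x ∂μ :=
        (setIntegral_condExp hm₂ (hf_int.indicator (hm s hs)) ht).symm
    _ = ∫ _ in t, μ[s.indicator f] ∂μ :=
        setIntegral_congr_ae (hm₂ t ht) (hcond.mono fun _ hx _ => hx)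
    _ = μ.real t • ∫ x in s, f x ∂μ := by rw [setIntegral_const, integral_indicator (hm s hs)]

theorem condExp_sup_ae_eq_condExp_of_indep (hm₁ : m₁ ≤ m) (hm : m ≤ mΩ) (hm₂ : m₂ ≤ mΩ)
    (hind : Indep m m₂ μ) (hf : StronglyMeasurable[m] f) : μ[f | m₁ ⊔ m₂] =ᵐ[μ] μ[f | m₁] := by
  by_cases hf_int : Integrable f μ
  swap
  · rw [condExp_of_not_integrable hf_int, condExp_of_not_integrable hf_int]
  have hle : m₁ ⊔ m₂ ≤ mΩ := sup_le (hm₁.trans hm) hm₂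
  refine (ae_eq_condExp_of_forall_setIntegral_eq hle hf_int
    (fun _ _ _ => integrable_condExp.integrableOn) (fun s hs _ => ?_)
    (stronglyMeasurable_condExp.mono (le_sup_left : m₁ ≤ m₁ ⊔ m₂)).aestronglyMeasurable).symm
  refine setIntegral_eq_setIntegral_of_isPiSystem hle (sup_eq_generateFrom_inter m₁ m₂)
    (isPiSystem_image2_inter (@isPiSystem_measurableSet _ m₁) (@isPiSystem_measurableSet _ m₂))
    integrable_condExp hf_int (integral_condExp (hm₁.trans hm)) ?_ s hs
  rintro _ ⟨s₁, hs₁, s₂, hs₂, rfl⟩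
  rw [setIntegral_inter_eq_measureReal_smul_of_indep hm hm₂ hind
      (stronglyMeasurable_condExp.mono hm₁) integrable_condExp (hm₁ _ hs₁) hs₂,
    setIntegral_inter_eq_measureReal_smul_of_indep hm hm₂ hind hf hf_int (hm₁ _ hs₁) hs₂,
    setIntegral_condExp (hm₁.trans hm) hf_int hs₁]

end CondExp

section Pi

variable {ι : Type*} {X : ι → Type*} [∀ i, MeasurableSpace (X i)]

lemma measurable_piFinset_eval {s : Finset ι} {i : ι} (hi : i ∈ s) :
    Measurable[piFinset s] (fun x : Π i, X i => x i) :=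
  (measurable_pi_apply (⟨i, hi⟩ : s)).comp (comap_measurable (m := pi) (s.restrict (π := X)))

lemma piFinset_union [DecidableEq ι] (s t : Finset ι) :
    piFinset (X := X) (s ∪ t) = piFinset s ⊔ piFinset t := by
  refine le_antisymm (Measurable.comap_le ?_)
    (sup_le (piFinset.mono Finset.subset_union_left) (piFinset.mono Finset.subset_union_right))
  refine (@measurable_pi_iff _ _ _ (piFinset s ⊔ piFinset t) _ _).2 fun ⟨i, hi⟩ => ?_
  rcases Finset.mem_union.1 hi with hi | hi
  · exact (measurable_piFinset_eval hi).mono le_sup_left le_rfl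
  · exact (measurable_piFinset_eval hi).mono le_sup_right le_rfl

lemma Measurable.measurable_piFinset_of_dependsOn {Z : Type*} [MeasurableSpace Z]
    {s : Finset ι} {f : (Π i, X i) → Z} (hf : Measurable f) (hdep : DependsOn f s) :
    Measurable[piFinset s] f := by
  classical
  rcases isEmpty_or_nonempty (Π i, X i) with _ | ⟨⟨x₀⟩⟩
  · exact fun _ _ => Subsingleton.measurableSet
  have hfac : (f ∘ Function.updateFinset x₀ s) ∘ s.restrict = f :=
    funext fun x => hdep fun i hi => by simp [Function.updateFinset, show i ∈ s from hi]
  exact hfac ▸ (hf.comp measurable_updateFinset).comp (comap_measurable _)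

lemma indep_piFinset_of_disjoint [Fintype ι] {μ : (i : ι) → Measure (X i)}
    [∀ i, IsProbabilityMeasure (μ i)] {s t : Finset ι} (hst : Disjoint s t) :
    Indep (piFinset s) (piFinset t) (Measure.pi μ) :=
  (IndepFun_iff_Indep _ _ _).1 <| (iIndepFun_pi fun _ => aemeasurable_id).indepFun_finset s t hst
    measurable_pi_apply

end Pi

lemma sigmaSub_eq_piFinset (p : ℕ) (I : Finset (Fin p)) : sigmaSub p I = piFinset I := rfl

theorem stmt_5_general (p : ℕ) (μi : Fin p → Measure ℝ)
    [∀ i, IsProbabilityMeasure (μi i)]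
    (f : (Fin p → ℝ) → ℝ) (hfm : Measurable f)
    (Istar : Finset (Fin p))
    (hdep : ∀ ω ω' : Fin p → ℝ, (∀ i ∈ Istar, ω i = ω' i) → f ω = f ω')
    (I₁ I₂ : Finset (Fin p)) (hI₁ : I₁ ⊆ Istar) (hI₂ : Disjoint I₂ Istar) :
    (∫ ω, (f ω - ((Measure.pi μi)[f|sigmaSub p (I₁ ∪ I₂)]) ω) ^ 2 ∂(Measure.pi μi)
        = (∫ ω, (f ω - ((Measure.pi μi)[f|sigmaSub p I₁]) ω) ^ 2 ∂(Measure.pi μi))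
          + ∫ ω, (((Measure.pi μi)[f|sigmaSub p I₁]) ω
              - ((Measure.pi μi)[f|sigmaSub p (I₁ ∪ I₂)]) ω) ^ 2 ∂(Measure.pi μi)) ∧
      (∫ ω, (f ω - ((Measure.pi μi)[f|sigmaSub p I₁]) ω) ^ 2 ∂(Measure.pi μi))
        ≤ ∫ ω, (f ω - ((Measure.pi μi)[f|sigmaSub p (I₁ ∪ I₂)]) ω) ^ 2 ∂(Measure.pi μi) := by
  have hf : StronglyMeasurable[piFinset Istar] f :=
    (hfm.measurable_piFinset_of_dependsOn fun x y h => hdep x y h).stronglyMeasurable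
  have hcond : (Measure.pi μi)[f|sigmaSub p (I₁ ∪ I₂)] =ᵐ[Measure.pi μi]
      (Measure.pi μi)[f|sigmaSub p I₁] := by
    rw [sigmaSub_eq_piFinset, sigmaSub_eq_piFinset, piFinset_union]
    exact condExp_sup_ae_eq_condExp_of_indep (piFinset.mono hI₁) (piFinset.le _) (piFinset.le _)
      (indep_piFinset_of_disjoint hI₂.symm) hf
  have hdist : ∫ ω, (f ω - ((Measure.pi μi)[f|sigmaSub p (I₁ ∪ I₂)]) ω) ^ 2 ∂(Measure.pi μi)
      = ∫ ω, (f ω - ((Measure.pi μi)[f|sigmaSub p I₁]) ω) ^ 2 ∂(Measure.pi μi) :=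
    integral_congr_ae (hcond.mono fun ω h => by simp only [h])
  have hgap : ∫ ω, (((Measure.pi μi)[f|sigmaSub p I₁]) ω
      - ((Measure.pi μi)[f|sigmaSub p (I₁ ∪ I₂)]) ω) ^ 2 ∂(Measure.pi μi) = 0 :=
    integral_eq_zero_of_ae (hcond.mono fun ω h => by simp [h])
  exact ⟨by rw [hdist, hgap, add_zero], hdist.ge⟩

/-- Under independent coordinates, if `f*` depends only on the coordinates in `I*` and
`I = I₁ ∪ I₂` with `I₁ ⊆ I*` and `I₂ ∩ I* = ∅`, then the squared L² distance from `f*`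
to functions of `X_I` equals the squared L² distance from `f*` to functions of `X_{I₁}`
plus `E[(E[f*|X_{I₁}] - E[f*|X_I])²]`; in particular `d²(f*,Θ_I) ≥ d²(f*,Θ_{I₁})`.
(Here the squared distance to `Θ_I` is `E[(f* - E[f*|X_I])²]`, conditional expectation
being the orthogonal projection onto `Θ_I`.) -/
theorem stmt_5 (p : ℕ) (μi : Fin p → Measure ℝ)
    [∀ i, IsProbabilityMeasure (μi i)]
    (f : (Fin p → ℝ) → ℝ) (hfm : Measurable f)
    (hf2 : MemLp f 2 (Measure.pi μi))
    (Istar : Finset (Fin p))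
    (hdep : ∀ ω ω' : Fin p → ℝ, (∀ i ∈ Istar, ω i = ω' i) → f ω = f ω')
    (I₁ I₂ : Finset (Fin p)) (hI₁ : I₁ ⊆ Istar) (hI₂ : Disjoint I₂ Istar) :
    (∫ ω, (f ω - ((Measure.pi μi)[f|sigmaSub p (I₁ ∪ I₂)]) ω) ^ 2 ∂(Measure.pi μi)
        = (∫ ω, (f ω - ((Measure.pi μi)[f|sigmaSub p I₁]) ω) ^ 2 ∂(Measure.pi μi))
          + ∫ ω, (((Measure.pi μi)[f|sigmaSub p I₁]) ω
              - ((Measure.pi μi)[f|sigmaSub p (I₁ ∪ I₂)]) ω) ^ 2 ∂(Measure.pi μi)) ∧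
      (∫ ω, (f ω - ((Measure.pi μi)[f|sigmaSub p I₁]) ω) ^ 2 ∂(Measure.pi μi))
        ≤ ∫ ω, (f ω - ((Measure.pi μi)[f|sigmaSub p (I₁ ∪ I₂)]) ω) ^ 2 ∂(Measure.pi μi) :=
  stmt_5_general p μi f hfm Istar hdep I₁ I₂ hI₁ hI₂
end

section
/- Let r_n(θ) = −log(p_θ(X)/p_{θ*}(X)) be the negative log-likelihood ratio and let B = {θ : E_{θ*}[r_n(θ)] ≤ nε², Var_{θ*}[r_n(θ)] ≤ nε²}. Let ρ be a probability measure supported on B. Then with P_{θ*}-probability at least 1 − 1/((D−1)² n ε²), one has ∫ r_n(θ) ρ(dθ) ≤ D n ε², for any D > 1. -/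
/-!
Let `Y x = ∫ r θ x ∂ρ`. By Fubini, `E Y = ∫ E r(θ) ∂ρ ≤ nε²`. Centering each `r θ` at its mean
and applying Jensen's inequality for the square in `θ`, then Fubini again, gives
`Var Y ≤ ∫ Var r(θ) ∂ρ ≤ nε²`. Chebyshev's inequality at distance `(D - 1) nε²` from the mean
then bounds `P (Y > D nε²)` by `nε² / ((D - 1) nε²)² = 1 / ((D - 1)² nε²)`.
-/

open MeasureTheory ProbabilityTheory

section Chebyshev

variable {Ω : Type*} [MeasurableSpace Ω] {ν : Measure Ω} [IsProbabilityMeasure ν]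

lemma sq_integral_le_integral_sq {g : Ω → ℝ} (hg : MemLp g 2 ν) :
    (∫ x, g x ∂ν) ^ 2 ≤ ∫ x, g x ^ 2 ∂ν := by
  have h := variance_nonneg g ν
  rw [variance_eq_sub hg] at h
  simp only [Pi.pow_apply] at h
  linarith

lemma one_sub_variance_div_sq_le_measure_le {Y : Ω → ℝ} (hY : MemLp Y 2 ν) {a c : ℝ}
    (hc : 0 < c) (hmean : ∫ x, Y x ∂ν ≤ a) :
    1 - variance Y ν / c ^ 2 ≤ (ν {x | Y x ≤ a + c}).toReal := by
  set A := {x | Y x ≤ a + c}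
  have hsub : Aᶜ ⊆ {x | c ≤ |Y x - ν[Y]|} := fun x hx => by
    simp only [A, Set.mem_compl_iff, Set.mem_ofPred_eq, not_le] at hx ⊢
    exact le_abs.2 (Or.inl (by linarith))
  have htail : (ν Aᶜ).toReal ≤ variance Y ν / c ^ 2 :=
    ENNReal.toReal_le_of_le_ofReal (div_nonneg (variance_nonneg _ _) (sq_nonneg _))
      ((measure_mono hsub).trans (meas_ge_le_variance_div_sq hY hc))
  have hcover : 1 ≤ (ν A).toReal + (ν Aᶜ).toReal := by
    rw [← ENNReal.toReal_add (measure_ne_top _ _) (measure_ne_top _ _)]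
    simpa using ENNReal.toReal_mono (by finiteness) (measure_univ_le_add_compl (μ := ν) A)
  linarith

end Chebyshev

section Mixture

variable {𝒳 Θ : Type*} [MeasurableSpace 𝒳] [MeasurableSpace Θ]
  {P : Measure 𝒳} {ρ : Measure Θ} {f : 𝒳 × Θ → ℝ}

lemma MeasureTheory.MemLp.prod_right_ae [SFinite P] [SFinite ρ] (hf : MemLp f 2 (P.prod ρ)) :
    ∀ᵐ x ∂P, MemLp (fun θ => f (x, θ)) 2 ρ := by
  filter_upwards [hf.integrable_sq.prod_right_ae, hf.aestronglyMeasurable.prodMk_left]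
    with x hsq hmeas
  exact (memLp_two_iff_integrable_sq hmeas).2 hsq

lemma MeasureTheory.MemLp.integral_prod_left [SFinite P] [IsProbabilityMeasure ρ]
    (hf : MemLp f 2 (P.prod ρ)) :
    MemLp (fun x => ∫ θ, f (x, θ) ∂ρ) 2 P := by
  have hmeas : AEStronglyMeasurable (fun x => ∫ θ, f (x, θ) ∂ρ) P :=
    hf.aestronglyMeasurable.integral_prod_right'
  refine (memLp_two_iff_integrable_sq hmeas).2
    (hf.integrable_sq.integral_prod_left.mono' (hmeas.pow 2) ?_)
  filter_upwards [hf.prod_right_ae] with x hx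
  rw [Real.norm_of_nonneg (sq_nonneg _)]
  exact sq_integral_le_integral_sq hx

lemma variance_integral_prod_le [IsProbabilityMeasure P] [IsProbabilityMeasure ρ]
    (hf : MemLp f 2 (P.prod ρ)) :
    variance (fun x => ∫ θ, f (x, θ) ∂ρ) P ≤ ∫ θ, variance (fun x => f (x, θ)) P ∂ρ := by
  set m : Θ → ℝ := fun θ => ∫ x, f (x, θ) ∂P
  have hswap : MemLp (f ∘ Prod.swap) 2 (ρ.prod P) :=
    hf.comp_measurePreserving Measure.measurePreserving_swap
  have hm : MemLp m 2 ρ := hswap.integral_prod_left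
  set g : 𝒳 × Θ → ℝ := fun z => f z - m z.2
  have hg : MemLp g 2 (P.prod ρ) := hf.sub (hm.comp_measurePreserving measurePreserving_snd)
  have hcenter : (fun x => ∫ θ, g (x, θ) ∂ρ)
      =ᵐ[P] fun x => ∫ θ, f (x, θ) ∂ρ - ∫ y, ∫ θ, f (y, θ) ∂ρ ∂P := by
    filter_upwards [(hf.integrable one_le_two).prod_right_ae] with x hx
    rw [integral_sub hx (hm.integrable one_le_two),
      integral_integral_swap (f := fun y θ => f (y, θ)) (hf.integrable one_le_two)]
  calc variance (fun x => ∫ θ, f (x, θ) ∂ρ) P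
      = ∫ x, (∫ θ, g (x, θ) ∂ρ) ^ 2 ∂P := by
        rw [variance_eq_integral hf.integral_prod_left.aemeasurable]
        exact integral_congr_ae (hcenter.fun_comp (· ^ 2)).symm
    _ ≤ ∫ x, ∫ θ, g (x, θ) ^ 2 ∂ρ ∂P := by
        refine integral_mono_ae hg.integral_prod_left.integrable_sq
          hg.integrable_sq.integral_prod_left ?_
        filter_upwards [hg.prod_right_ae] with x hx
        exact sq_integral_le_integral_sq hx
    _ = ∫ θ, ∫ x, g (x, θ) ^ 2 ∂P ∂ρ :=
        integral_integral_swap (f := fun x θ => g (x, θ) ^ 2) hg.integrable_sq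
    _ = ∫ θ, variance (fun x => f (x, θ)) P ∂ρ := by
        refine integral_congr_ae ?_
        filter_upwards [hswap.prod_right_ae] with θ hθ
        exact (variance_eq_integral hθ.aemeasurable).symm

lemma integral_integral_prod_le_of_ae_le [SFinite P] [IsProbabilityMeasure ρ]
    (hf : Integrable f (P.prod ρ)) {a : ℝ}
    (h : ∀ᵐ θ ∂ρ, ∫ x, f (x, θ) ∂P ≤ a) : ∫ x, ∫ θ, f (x, θ) ∂ρ ∂P ≤ a := by
  rw [integral_integral_swap (f := fun x θ => f (x, θ)) hf]
  calc ∫ θ, ∫ x, f (x, θ) ∂P ∂ρ ≤ ∫ _θ, a ∂ρ :=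
        integral_mono_ae hf.integral_prod_right (integrable_const a) h
    _ = a := by simp

lemma variance_integral_prod_le_of_ae_le [IsProbabilityMeasure P] [IsProbabilityMeasure ρ]
    (hf : MemLp f 2 (P.prod ρ)) {a : ℝ}
    (h : ∀ᵐ θ ∂ρ, variance (fun x => f (x, θ)) P ≤ a) :
    variance (fun x => ∫ θ, f (x, θ) ∂ρ) P ≤ a :=
  calc _ ≤ ∫ θ, variance (fun x => f (x, θ)) P ∂ρ := variance_integral_prod_le hf
    _ ≤ ∫ _θ, a ∂ρ :=
        integral_mono_of_nonneg (.of_forall fun _ => variance_nonneg _ _) (integrable_const a) h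
    _ = a := by simp

end Mixture

theorem stmt_19_general {𝒳 Θ : Type*} [MeasurableSpace 𝒳] [MeasurableSpace Θ]
    (P : Measure 𝒳) [IsProbabilityMeasure P]
    (ρ : Measure Θ) [IsProbabilityMeasure ρ]
    (r : Θ → 𝒳 → ℝ)
    (hmem : MemLp (fun z : 𝒳 × Θ => r z.2 z.1) 2 (P.prod ρ))
    (n : ℕ) (hn : 0 < n) (ε : ℝ) (hε : 0 < ε) (D : ℝ) (hD : 1 < D)
    (hB : ∀ᵐ θ ∂ρ, (∫ x, r θ x ∂P) ≤ n * ε ^ 2 ∧ variance (r θ) P ≤ n * ε ^ 2) :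
    1 - 1 / ((D - 1) ^ 2 * n * ε ^ 2)
      ≤ (P {x | ∫ θ, r θ x ∂ρ ≤ D * (n * ε ^ 2)}).toReal := by
  have ha : 0 < (n : ℝ) * ε ^ 2 := by positivity
  have hbound : n * ε ^ 2 / ((D - 1) * (n * ε ^ 2)) ^ 2 = 1 / ((D - 1) ^ 2 * n * ε ^ 2) := by
    have : D - 1 ≠ 0 := by linarith
    field_simp
  rw [← hbound]
  generalize (n : ℝ) * ε ^ 2 = a at ha hB ⊢
  have hmean : ∫ x, ∫ θ, r θ x ∂ρ ∂P ≤ a :=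
    integral_integral_prod_le_of_ae_le (hmem.integrable one_le_two) (hB.mono fun _ h => h.1)
  have hvar : variance (fun x => ∫ θ, r θ x ∂ρ) P ≤ a :=
    variance_integral_prod_le_of_ae_le (f := fun z => r z.2 z.1) hmem (hB.mono fun _ h => h.2)
  have hcheb := one_sub_variance_div_sq_le_measure_le hmem.integral_prod_left
    (mul_pos (sub_pos.2 hD) ha) hmean
  rw [show a + (D - 1) * a = D * a by ring] at hcheb
  exact (sub_le_sub_left (div_le_div_of_nonneg_right hvar (sq_nonneg _)) 1).trans hcheb

/-- Let `r_n(θ,x) = −log(p_θ(x)/p_{θ*}(x))` be the negative log-likelihood ratio, `P` the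
law of the data (density `p_{θ*}` w.r.t. `μ`), and `B = {θ : E_{θ*}[r_n(θ)] ≤ nε²,
Var_{θ*}[r_n(θ)] ≤ nε²}`.  If `ρ` is a probability measure supported on `B`, then with
`P`-probability at least `1 − 1/((D−1)² n ε²)` one has `∫ r_n(θ) ρ(dθ) ≤ D n ε²`,
for any `D > 1`. -/
theorem stmt_19 {𝒳 Θ : Type*} [MeasurableSpace 𝒳] [MeasurableSpace Θ]
    (μ : Measure 𝒳) [SigmaFinite μ]
    (pdens : Θ → 𝒳 → ℝ) (pstar : 𝒳 → ℝ)
    (hpm : Measurable (fun z : Θ × 𝒳 => pdens z.1 z.2)) (hpsm : Measurable pstar)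
    (hps0 : ∀ x, 0 ≤ pstar x)
    (P : Measure 𝒳) [IsProbabilityMeasure P]
    (hP : P = μ.withDensity fun x => ENNReal.ofReal (pstar x))
    (ρ : Measure Θ) [IsProbabilityMeasure ρ]
    (r : Θ → 𝒳 → ℝ) (hr : ∀ θ x, r θ x = Real.log (pstar x / pdens θ x))
    (hmem : MemLp (fun z : 𝒳 × Θ => r z.2 z.1) 2 (P.prod ρ))
    (n : ℕ) (hn : 0 < n) (ε : ℝ) (hε : 0 < ε) (D : ℝ) (hD : 1 < D)
    (hB : ∀ᵐ θ ∂ρ, (∫ x, r θ x ∂P) ≤ n * ε ^ 2 ∧ variance (r θ) P ≤ n * ε ^ 2) :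
    1 - 1 / ((D - 1) ^ 2 * n * ε ^ 2)
      ≤ (P {x | ∫ θ, r θ x ∂ρ ≤ D * (n * ε ^ 2)}).toReal :=
  stmt_19_general P ρ r hmem n hn ε hε D hD hB
end
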